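/- Let S be finite, ρ a probability distribution on S, and D = (X_1, …, X_m) i.i.d. samples from ρ. Suppose a learner π agrees with a fixed deterministic expert policy on every state appearing in D, and that value differences satisfy 0 ≤ V₁^{π_E}(s) − V₁^π(s) ≤ H for all s, with equality to 0 whenever s ∈ {X_1, …, X_m}. Then E[V^{π_E} − V^π] ≤ H·Σ_{s ∈ S} ρ(s)(1 − ρ(s))^m ≤ H·|S|/(e·m). -/

import Mathlib

/-!
The gap `g ω s` vanishes unless `s` is missing from the sample `ω`, an event of probability
`(1 - ρ s) ^ m`, so its expectation is at most `H * (1 - ρ s) ^ m`; summing against `ρ` gives the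
missing-mass bound. Each term satisfies `x (1 - x) ^ m ≤ x e^{-m x} ≤ 1 / (e m)`, because
`y e^{-y} ≤ e^{-1}`.
-/

open MeasureTheory

lemma mul_one_sub_pow_le_inv_exp_mul {x : ℝ} (hx0 : 0 ≤ x) (hx1 : x ≤ 1) {m : ℕ} (hm : 1 ≤ m) :
    x * (1 - x) ^ m ≤ 1 / (Real.exp 1 * m) := by
  have hm : (0 : ℝ) < m := by exact_mod_cast hm
  calc x * (1 - x) ^ m ≤ x * Real.exp (-x) ^ m := by
        gcongr
        exact Real.one_sub_le_exp_neg x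
    _ = (m * x) * Real.exp (-(m * x)) / m := by
        rw [← Real.exp_nat_mul]; field_simp
    _ ≤ Real.exp (-1) / m := by gcongr; exact Real.mul_exp_neg_le_exp_neg_one _
    _ = 1 / (Real.exp 1 * m) := by rw [Real.exp_neg]; field_simp

lemma PMF.measureReal_pi_forall_ne {S ι : Type*} [MeasurableSpace S] [MeasurableSingletonClass S]
    [Fintype ι] (ρ : PMF S) (s : S) :
    (Measure.pi fun _ : ι => ρ.toMeasure).real {ω | ∀ i, ω i ≠ s}
      = (1 - (ρ s).toReal) ^ Fintype.card ι := by
  have hpi : {ω : ι → S | ∀ i, ω i ≠ s} = Set.univ.pi fun _ => {s}ᶜ := by ext; simp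
  rw [hpi, measureReal_def, Measure.pi_pi, Finset.prod_const, Finset.card_univ,
    prob_compl_eq_one_sub (measurableSet_singleton s),
    ρ.toMeasure_apply_singleton s (measurableSet_singleton s), ENNReal.toReal_pow,
    ENNReal.toReal_sub_of_le (ρ.coe_le_one s) ENNReal.one_ne_top, ENNReal.toReal_one]

lemma PMF.integral_pi_le_of_eq_zero_of_mem {S ι : Type*} [Finite S] [MeasurableSpace S]
    [MeasurableSingletonClass S] [Fintype ι] (ρ : PMF S) (s : S) {H : ℝ} {f : (ι → S) → ℝ}
    (hfH : ∀ ω, f ω ≤ H) (hf0 : ∀ ω, (∃ i, ω i = s) → f ω = 0) :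
    ∫ ω, f ω ∂(Measure.pi fun _ : ι => ρ.toMeasure)
      ≤ H * (1 - (ρ s).toReal) ^ Fintype.card ι := by
  set A : Set (ι → S) := {ω | ∀ i, ω i ≠ s}
  have hf_le : ∀ ω, f ω ≤ A.indicator (fun _ => H) ω := by
    intro ω
    by_cases hω : ω ∈ A
    · simpa [Set.indicator_of_mem hω] using hfH ω
    · simp only [A, Set.mem_ofPred_eq, not_forall, not_not] at hω
      simp [A, hf0 ω hω, hω]
  calc ∫ ω, f ω ∂(Measure.pi fun _ : ι => ρ.toMeasure)
      ≤ ∫ ω, A.indicator (fun _ => H) ω ∂(Measure.pi fun _ : ι => ρ.toMeasure) :=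
        integral_mono .of_finite .of_finite hf_le
    _ = H * (1 - (ρ s).toReal) ^ Fintype.card ι := by
        rw [integral_indicator_const _ (Set.toFinite A).measurableSet,
          PMF.measureReal_pi_forall_ne, smul_eq_mul, mul_comm]

theorem stmt_16_general (S : Type*) [Fintype S] [MeasurableSpace S] [MeasurableSingletonClass S]
    (ρ : PMF S) (m : ℕ) (hm : 1 ≤ m) (H : ℝ) (hH : 0 ≤ H)
    (g : (Fin m → S) → S → ℝ)
    (hg1 : ∀ ω s, g ω s ≤ H)
    (hobs : ∀ ω s, (∃ i, ω i = s) → g ω s = 0) :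
    (∫ ω : Fin m → S, (∑ s : S, (ρ s).toReal * g ω s)
        ∂(Measure.pi fun _ => ρ.toMeasure))
      ≤ H * ∑ s : S, (ρ s).toReal * (1 - (ρ s).toReal) ^ m
    ∧ H * ∑ s : S, (ρ s).toReal * (1 - (ρ s).toReal) ^ m
      ≤ H * (Fintype.card S : ℝ) / (Real.exp 1 * m) := by
  have hρ1 (s : S) : (ρ s).toReal ≤ 1 :=
    ENNReal.toReal_le_of_le_ofReal zero_le_one (by simpa using ρ.coe_le_one s)
  constructor
  · rw [integral_finsetSum _ fun s _ => .of_finite, Finset.mul_sum]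
    refine Finset.sum_le_sum fun s _ => ?_
    rw [integral_const_mul, mul_left_comm]
    gcongr
    simpa using PMF.integral_pi_le_of_eq_zero_of_mem ρ s (hg1 · s) (hobs · s)
  · rw [mul_div_assoc]
    gcongr
    calc ∑ s : S, (ρ s).toReal * (1 - (ρ s).toReal) ^ m
        ≤ ∑ _s : S, 1 / (Real.exp 1 * m) :=
          Finset.sum_le_sum fun s _ =>
            mul_one_sub_pow_le_inv_exp_mul ENNReal.toReal_nonneg (hρ1 s) hm
      _ = Fintype.card S / (Real.exp 1 * m) := by simp [div_eq_mul_inv]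

theorem stmt_16 (S : Type*) [Fintype S] [MeasurableSpace S] [MeasurableSingletonClass S]
    (ρ : PMF S) (m : ℕ) (hm : 1 ≤ m) (H : ℝ) (hH : 0 ≤ H)
    (g : (Fin m → S) → S → ℝ)
    (hg0 : ∀ ω s, 0 ≤ g ω s) (hg1 : ∀ ω s, g ω s ≤ H)
    (hobs : ∀ ω s, (∃ i, ω i = s) → g ω s = 0) :
    (∫ ω : Fin m → S, (∑ s : S, (ρ s).toReal * g ω s)
        ∂(Measure.pi fun _ => ρ.toMeasure))
      ≤ H * ∑ s : S, (ρ s).toReal * (1 - (ρ s).toReal) ^ m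
    ∧ H * ∑ s : S, (ρ s).toReal * (1 - (ρ s).toReal) ^ m
      ≤ H * (Fintype.card S : ℝ) / (Real.exp 1 * m) :=
  stmt_16_general S ρ m hm H hH g hg1 hobs
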